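/- arXiv:1005.3801 — 3 statements merged into one kernel-verified Lean document; each statement's English description precedes it below -/
import Mathlib

section
/- Let φ : [0,∞) → ℝ be twice continuously differentiable with φ, φ′ and φ″ bounded. For t > 0 set u(t) := 2 ∫₀^∞ (2πt)^{-1/2} e^{-s²/(2t)} φ(s) ds. Then u is differentiable on (0,∞) with u′(t) = φ′(0)/√(2πt) + ∫₀^∞ (2πt)^{-1/2} e^{-s²/(2t)} φ″(s) ds for every t > 0, and u(t) → φ(0) as t ↓ 0. -/
open MeasureTheory ProbabilityTheory Real Filter
open scoped NNReal ENNReal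

noncomputable section

/-- The `d`-dimensional Gaussian heat kernel `g_s(x,y)`. -/
def heatKernel (d : ℕ) (s : ℝ) (x y : EuclideanSpace ℝ (Fin d)) : ℝ :=
  (2 * π * s) ^ (-(d : ℝ) / 2) * Real.exp (-‖x - y‖ ^ 2 / (2 * s))

/-- The transition density over a time increment `ε` of reflecting one-dimensional
Brownian motion: `p(s, s+ε; y, z)`. -/
def reflKernel (ε y z : ℝ) : ℝ :=
  (2 * π * ε) ^ (-(1 : ℝ) / 2) *
    (Real.exp (-(y - z) ^ 2 / (2 * ε)) + Real.exp (-(y + z) ^ 2 / (2 * ε)))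

/-- First partial derivative in direction `i`. -/
def partialDeriv (d : ℕ) (g : EuclideanSpace ℝ (Fin d) → ℝ) (i : Fin d)
    (x : EuclideanSpace ℝ (Fin d)) : ℝ :=
  fderiv ℝ g x (EuclideanSpace.single i 1)

/-- Second partial derivative `D_ij`. -/
def secondPartial (d : ℕ) (g : EuclideanSpace ℝ (Fin d) → ℝ) (i j : Fin d)
    (x : EuclideanSpace ℝ (Fin d)) : ℝ :=
  partialDeriv d (partialDeriv d g j) i x

/-- The Laplacian `Δg`. -/
def lap (d : ℕ) (g : EuclideanSpace ℝ (Fin d) → ℝ) (x : EuclideanSpace ℝ (Fin d)) : ℝ :=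
  ∑ i, secondPartial d g i i x

/-- `B` is a standard one-dimensional Brownian motion started at `0` under `P`. -/
structure IsBM1 {Ω : Type*} [MeasurableSpace Ω] (P : Measure Ω) (B : Ω → ℝ → ℝ) : Prop where
  measJoint : Measurable fun p : Ω × ℝ => B p.1 p.2
  init : ∀ ω, B ω 0 = 0
  cont : ∀ ω, ContinuousOn (B ω) (Set.Ici 0)
  incr : ∀ s t : ℝ, 0 ≤ s → s ≤ t →
    Measure.map (fun ω => B ω t - B ω s) P = gaussianReal 0 (Real.toNNReal (t - s))
  indepIncr : ∀ (n : ℕ) (t : Fin (n + 1) → ℝ), Monotone t → 0 ≤ t 0 →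
    iIndepFun
      (fun i : Fin n => fun ω => B ω (t i.succ) - B ω (t i.castSucc)) P

/-- `X` is a standard `d`-dimensional Brownian motion started at `x` under `P`. -/
structure IsBMd {Ω : Type*} [MeasurableSpace Ω] (d : ℕ) (P : Measure Ω)
    (X : Ω → ℝ → EuclideanSpace ℝ (Fin d)) (x : EuclideanSpace ℝ (Fin d)) : Prop where
  measJoint : Measurable fun p : Ω × ℝ => X p.1 p.2
  init : ∀ ω, X ω 0 = x
  cont : ∀ ω, ContinuousOn (X ω) (Set.Ici 0)
  incr : ∀ s t : ℝ, 0 ≤ s → s < t →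
    Measure.map (fun ω => X ω t - X ω s) P =
      volume.withDensity fun y => ENNReal.ofReal (heatKernel d (t - s) 0 y)
  indepIncr : ∀ (n : ℕ) (t : Fin (n + 1) → ℝ), Monotone t → 0 ≤ t 0 →
    iIndepFun
      (fun i : Fin n => fun ω => X ω (t i.succ) - X ω (t i.castSucc)) P

/-- First exit time of the process `X` from `G`. -/
def tauExit {Ω : Type*} {d : ℕ} (X : Ω → ℝ → EuclideanSpace ℝ (Fin d))
    (G : Set (EuclideanSpace ℝ (Fin d))) (ω : Ω) : ℝ :=
  sInf {t : ℝ | 0 ≤ t ∧ X ω t ∉ G}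

/-- First exit time of the Brownian-time process `t ↦ X(|B(t)|)` from `G`. -/
def TauExit {Ω : Type*} {d : ℕ} (B : Ω → ℝ → ℝ) (X : Ω → ℝ → EuclideanSpace ℝ (Fin d))
    (G : Set (EuclideanSpace ℝ (Fin d))) (ω : Ω) : ℝ :=
  sInf {t : ℝ | 0 ≤ t ∧ X ω (|B ω t|) ∉ G}

/-- `G` has smooth boundary: near each boundary point, `G` is the sublevel set of a smooth
defining function with nonvanishing gradient. -/
def HasSmoothBoundary (d : ℕ) (G : Set (EuclideanSpace ℝ (Fin d))) : Prop :=
  ∀ x ∈ frontier G, ∃ (U : Set (EuclideanSpace ℝ (Fin d))) (φ : EuclideanSpace ℝ (Fin d) → ℝ),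
    IsOpen U ∧ x ∈ U ∧ ContDiff ℝ (⊤ : ℕ∞) φ ∧ (∀ y ∈ U, fderiv ℝ φ y ≠ 0) ∧
    G ∩ U = {y | φ y < 0} ∩ U

namespace BTaux

open Set MeasureTheory Real Filter Topology

/-- Gaussian kernel on the half line. -/
def gK (t s : ℝ) : ℝ := (2 * π * t) ^ (-(1 : ℝ) / 2) * Real.exp (-s ^ 2 / (2 * t))

lemma gK_pos {t : ℝ} (ht : 0 < t) (s : ℝ) : 0 < gK t s := by
  have h : (0:ℝ) < 2 * π * t := by positivity
  exact mul_pos (Real.rpow_pos_of_pos h _) (Real.exp_pos _)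

lemma gK_cont (t : ℝ) : Continuous fun s => gK t s := by
  unfold gK
  exact continuous_const.mul (Real.continuous_exp.comp ((continuous_pow 2).neg.div_const _))

lemma exp_arg_eq (t s : ℝ) : -s ^ 2 / (2 * t) = -(1 / (2 * t)) * s ^ 2 := by ring

lemma int_poly_gauss {k : ℝ} (hk : 0 < k) (c₀ c₁ c₂ : ℝ) :
    Integrable (fun s : ℝ => (c₀ + c₁ * s + c₂ * s ^ 2) * Real.exp (-k * s ^ 2)) := by
  have h0 := (integrable_exp_neg_mul_sq hk).const_mul c₀
  have h1 := (integrable_rpow_mul_exp_neg_mul_sq hk (by norm_num : (-1:ℝ) < 1)).const_mul c₁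
  have h2 := (integrable_rpow_mul_exp_neg_mul_sq hk (by norm_num : (-1:ℝ) < 2)).const_mul c₂
  have h := (h0.add h1).add h2
  have e2 : ∀ x : ℝ, x ^ (2:ℝ) = x ^ (2:ℕ) := fun x => by
    rw [← Real.rpow_natCast x 2]; norm_num
  refine h.congr (ae_of_all _ fun s => ?_)
  simp only [e2, Real.rpow_one, Pi.add_apply]
  ring_nf

lemma integrableOn_of_bound {f g : ℝ → ℝ}
    (hf : AEStronglyMeasurable f (volume.restrict (Ioi 0)))
    (hg : Integrable g) (h : ∀ s ∈ Ioi (0:ℝ), |f s| ≤ g s) :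
    IntegrableOn f (Ioi 0) := by
  refine hg.integrableOn.mono' hf ?_
  rw [ae_restrict_iff' measurableSet_Ioi]
  exact ae_of_all _ fun s hs => by simpa [Real.norm_eq_abs] using h s hs

lemma gK_hasDerivAt_s {t : ℝ} (ht : 0 < t) (s : ℝ) :
    HasDerivAt (fun s => gK t s) (gK t s * (-s / t)) s := by
  have h1 : HasDerivAt (fun s : ℝ => -s ^ 2 / (2 * t)) (-s / t) s := by
    have h := ((hasDerivAt_pow 2 s).neg.div_const (2 * t))
    refine h.congr_deriv ?_
    field_simp
    ring
  have h2 := (h1.exp).const_mul ((2 * π * t) ^ (-(1:ℝ) / 2))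
  have e : gK t s * (-s / t) =
      (2 * π * t) ^ (-(1:ℝ) / 2) * (Real.exp (-s ^ 2 / (2 * t)) * (-s / t)) := by
    simp only [gK]; ring
  rw [e]
  exact h2

lemma gK_hasDerivAt_ss {t : ℝ} (ht : 0 < t) (s : ℝ) :
    HasDerivAt (fun s => gK t s * (-s / t)) (gK t s * (s ^ 2 / t ^ 2 - 1 / t)) s := by
  have hv : HasDerivAt (fun s : ℝ => -s / t) (-1 / t) s := by
    simpa using ((hasDerivAt_id s).neg.div_const t)
  have h := (gK_hasDerivAt_s ht s).mul hv
  have e : gK t s * (s ^ 2 / t ^ 2 - 1 / t)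
      = gK t s * (-s / t) * (-s / t) + gK t s * (-1 / t) := by ring
  rw [e]
  exact h

lemma gK_hasDerivAt_t (s : ℝ) {t : ℝ} (ht : 0 < t) :
    HasDerivAt (fun t => gK t s) (gK t s * (s ^ 2 / (2 * t ^ 2) - 1 / (2 * t))) t := by
  have hpos : (0:ℝ) < 2 * π * t := by positivity
  have hin : HasDerivAt (fun t : ℝ => 2 * π * t) (2 * π) t := by
    simpa using (hasDerivAt_id t).const_mul (2 * π)
  have h1 : HasDerivAt (fun t : ℝ => (2 * π * t) ^ (-(1:ℝ) / 2))
      (-(1:ℝ) / 2 * (2 * π * t) ^ (-(1:ℝ) / 2 - 1) * (2 * π)) t := by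
    have h := HasDerivAt.comp t
      (Real.hasDerivAt_rpow_const (x := 2 * π * t) (p := -(1:ℝ)/2) (Or.inl hpos.ne')) hin
    exact h
  have h2 : HasDerivAt (fun t : ℝ => Real.exp (-s ^ 2 / (2 * t)))
      (Real.exp (-s ^ 2 / (2 * t)) * (s ^ 2 / (2 * t ^ 2))) t := by
    have hi : HasDerivAt (fun t : ℝ => -s ^ 2 / (2 * t)) (s ^ 2 / (2 * t ^ 2)) t := by
      have h := (hasDerivAt_inv ht.ne').const_mul (-s ^ 2 / 2)
      have hfun : (fun t : ℝ => -s ^ 2 / (2 * t)) = fun t : ℝ => -s ^ 2 / 2 * t⁻¹ := by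
        funext x; ring
      rw [hfun]
      refine h.congr_deriv ?_
      field_simp
    exact hi.exp
  have h := h1.mul h2
  have key : (2 * π * t) ^ (-(1:ℝ) / 2 - 1) = (2 * π * t) ^ (-(1:ℝ) / 2) / (2 * π * t) := by
    rw [Real.rpow_sub hpos, Real.rpow_one]
  have e : gK t s * (s ^ 2 / (2 * t ^ 2) - 1 / (2 * t)) =
      -(1:ℝ) / 2 * (2 * π * t) ^ (-(1:ℝ) / 2 - 1) * (2 * π) * Real.exp (-s ^ 2 / (2 * t)) +
      (2 * π * t) ^ (-(1:ℝ) / 2) * (Real.exp (-s ^ 2 / (2 * t)) * (s ^ 2 / (2 * t ^ 2))) := by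
    rw [key]
    simp only [gK]
    field_simp
    ring
  rw [e]
  exact h

lemma tendsto_gauss_decay {k : ℝ} (hk : 0 < k) (c n : ℝ) :
    Tendsto (fun s : ℝ => c * (s ^ n * Real.exp (-k * s ^ 2))) atTop (𝓝 0) := by
  have hexp : Tendsto (fun x : ℝ => Real.exp (-(1/2) * x)) atTop (𝓝 0) := by
    have h1 : Tendsto (fun x : ℝ => (1/2) * x) atTop atTop :=
      Tendsto.const_mul_atTop (by norm_num) tendsto_id
    have h := Real.tendsto_exp_neg_atTop_nhds_zero.comp h1
    exact h.congr fun x => by simp [Function.comp, neg_mul]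
  have h := (rpow_mul_exp_neg_mul_sq_isLittleO_exp_neg hk n).tendsto_zero_of_tendsto hexp
  simpa using h.const_mul c

end BTaux


open BTaux

/-- Integration-by-parts identity for
`u(t) = 2 ∫₀^∞ (2πt)^{-1/2} e^{-s²/(2t)} φ(s) ds` with `φ` twice continuously differentiable
on `[0,∞)` with `φ, φ', φ''` bounded: `u` is differentiable on `(0,∞)` with
`u'(t) = φ'(0)/√(2πt) + ∫₀^∞ (2πt)^{-1/2} e^{-s²/(2t)} φ''(s) ds`, and `u(t) → φ(0)` as `t ↓ 0`. -/
theorem stmt1 (φ φ' φ'' : ℝ → ℝ)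
    (hφ' : ∀ s ∈ Set.Ici (0 : ℝ), HasDerivWithinAt φ (φ' s) (Set.Ici 0) s)
    (hφ'' : ∀ s ∈ Set.Ici (0 : ℝ), HasDerivWithinAt φ' (φ'' s) (Set.Ici 0) s)
    (hcont : ContinuousOn φ'' (Set.Ici 0))
    (C : ℝ) (hbd : ∀ s ∈ Set.Ici (0 : ℝ), |φ s| ≤ C ∧ |φ' s| ≤ C ∧ |φ'' s| ≤ C)
    (u : ℝ → ℝ)
    (hu : ∀ t, 0 < t → u t =
      2 * ∫ s in Set.Ioi (0 : ℝ), (2 * π * t) ^ (-(1 : ℝ) / 2) * Real.exp (-s ^ 2 / (2 * t)) * φ s) :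
    (∀ t, 0 < t → HasDerivAt u
      (φ' 0 / Real.sqrt (2 * π * t) +
        ∫ s in Set.Ioi (0 : ℝ),
          (2 * π * t) ^ (-(1 : ℝ) / 2) * Real.exp (-s ^ 2 / (2 * t)) * φ'' s) t) ∧
    Tendsto u (nhdsWithin 0 (Set.Ioi 0)) (nhds (φ 0)) := by
  have hC : 0 ≤ C := (abs_nonneg _).trans (hbd 0 Set.self_mem_Ici).1
  have hφc : ContinuousOn φ (Set.Ici 0) := fun s hs => (hφ' s hs).continuousWithinAt
  have hφ'c : ContinuousOn φ' (Set.Ici 0) := fun s hs => (hφ'' s hs).continuousWithinAt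
  constructor
  · intro t ht
    have hkpos : (0:ℝ) < 1/(2*t) := by positivity
    have hKpos : (0:ℝ) < (2*π*t) ^ (-(1:ℝ)/2) := Real.rpow_pos_of_pos (by positivity) _
    have I1 : MeasureTheory.IntegrableOn (fun s => gK t s * φ s) (Set.Ioi 0) := by
      refine integrableOn_of_bound
        (((gK_cont t).continuousOn.mul (hφc.mono Set.Ioi_subset_Ici_self)).aestronglyMeasurable
          measurableSet_Ioi)
        (int_poly_gauss hkpos ((2*π*t) ^ (-(1:ℝ)/2) * C) 0 0) ?_
      intro s hs
      have h1 : |φ s| ≤ C := (hbd s (Set.mem_Ici.mpr (le_of_lt hs))).1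
      calc |gK t s * φ s| = gK t s * |φ s| := by
            rw [abs_mul, abs_of_pos (gK_pos ht s)]
        _ ≤ gK t s * C := mul_le_mul_of_nonneg_left h1 (gK_pos ht s).le
        _ = ((2*π*t) ^ (-(1:ℝ)/2) * C + 0 * s + 0 * s^2) * Real.exp (-(1/(2*t)) * s^2) := by
            simp only [gK]; rw [← exp_arg_eq]; ring
    have I2 : MeasureTheory.IntegrableOn (fun s => gK t s * (-s/t) * φ' s) (Set.Ioi 0) := by
      refine integrableOn_of_bound
        ((((gK_cont t).mul (continuous_id.neg.div_const t)).continuousOn.mul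
          (hφ'c.mono Set.Ioi_subset_Ici_self)).aestronglyMeasurable measurableSet_Ioi)
        (int_poly_gauss hkpos 0 ((2*π*t) ^ (-(1:ℝ)/2) * C / t) 0) ?_
      intro s hs
      have hs0 : (0:ℝ) < s := hs
      have h1 : |φ' s| ≤ C := (hbd s (Set.mem_Ici.mpr (le_of_lt hs))).2.1
      have habs : |(-s/t)| = s/t := by
        rw [neg_div, abs_neg, abs_of_pos (by positivity)]
      calc |gK t s * (-s/t) * φ' s| = gK t s * (s/t) * |φ' s| := by
            rw [abs_mul, abs_mul, abs_of_pos (gK_pos ht s), habs]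
        _ ≤ gK t s * (s/t) * C :=
            mul_le_mul_of_nonneg_left h1 (mul_nonneg (gK_pos ht s).le (by positivity))
        _ = (0 + ((2*π*t) ^ (-(1:ℝ)/2) * C / t) * s + 0 * s^2) * Real.exp (-(1/(2*t)) * s^2) := by
            simp only [gK]; rw [← exp_arg_eq]; ring
    have I3 : MeasureTheory.IntegrableOn (fun s => gK t s * (s^2/t^2 - 1/t) * φ s) (Set.Ioi 0) := by
      refine integrableOn_of_bound
        ((((gK_cont t).mul (((continuous_pow 2).div_const _).sub continuous_const)).continuousOn.mul
          (hφc.mono Set.Ioi_subset_Ici_self)).aestronglyMeasurable measurableSet_Ioi)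
        (int_poly_gauss hkpos ((2*π*t) ^ (-(1:ℝ)/2) * C / t) 0
          ((2*π*t) ^ (-(1:ℝ)/2) * C / t^2)) ?_
      intro s hs
      have h1 : |φ s| ≤ C := (hbd s (Set.mem_Ici.mpr (le_of_lt hs))).1
      have h2 : |s^2/t^2 - 1/t| ≤ s^2/t^2 + 1/t := by
        refine (abs_sub _ _).trans ?_
        rw [abs_of_nonneg (by positivity), abs_of_nonneg (by positivity)]
      calc |gK t s * (s^2/t^2 - 1/t) * φ s|
          = gK t s * |s^2/t^2 - 1/t| * |φ s| := by
            rw [abs_mul, abs_mul, abs_of_pos (gK_pos ht s)]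
        _ ≤ gK t s * (s^2/t^2 + 1/t) * C := by
            refine mul_le_mul (mul_le_mul_of_nonneg_left h2 (gK_pos ht s).le) h1 (abs_nonneg _) ?_
            exact mul_nonneg (gK_pos ht s).le (by positivity)
        _ = ((2*π*t) ^ (-(1:ℝ)/2) * C / t + 0 * s + ((2*π*t) ^ (-(1:ℝ)/2) * C / t^2) * s^2) *
              Real.exp (-(1/(2*t)) * s^2) := by
            simp only [gK]; rw [← exp_arg_eq]; ring
    have I4 : MeasureTheory.IntegrableOn (fun s => gK t s * φ'' s) (Set.Ioi 0) := by
      refine integrableOn_of_bound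
        (((gK_cont t).continuousOn.mul (hcont.mono Set.Ioi_subset_Ici_self)).aestronglyMeasurable
          measurableSet_Ioi)
        (int_poly_gauss hkpos ((2*π*t) ^ (-(1:ℝ)/2) * C) 0 0) ?_
      intro s hs
      have h1 : |φ'' s| ≤ C := (hbd s (Set.mem_Ici.mpr (le_of_lt hs))).2.2
      calc |gK t s * φ'' s| = gK t s * |φ'' s| := by
            rw [abs_mul, abs_of_pos (gK_pos ht s)]
        _ ≤ gK t s * C := mul_le_mul_of_nonneg_left h1 (gK_pos ht s).le
        _ = ((2*π*t) ^ (-(1:ℝ)/2) * C + 0 * s + 0 * s^2) * Real.exp (-(1/(2*t)) * s^2) := by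
            simp only [gK]; rw [← exp_arg_eq]; ring
    have hparam : HasDerivAt (fun τ => ∫ s in Set.Ioi (0:ℝ), gK τ s * φ s)
        (∫ s in Set.Ioi (0:ℝ), gK t s * (s^2/(2*t^2) - 1/(2*t)) * φ s) t := by
      have hballs : ∀ τ ∈ Metric.ball t (t/2), t/2 < τ ∧ τ < 3*t/2 := by
        intro τ hτ
        rw [Metric.mem_ball, Real.dist_eq, abs_lt] at hτ
        constructor <;> linarith [hτ.1, hτ.2]
      have hK'pos : (0:ℝ) < (2*π*(t/2)) ^ (-(1:ℝ)/2) := Real.rpow_pos_of_pos (by positivity) _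
      refine (hasDerivAt_integral_of_dominated_loc_of_deriv_le (s := Metric.ball t (t/2))
        (μ := MeasureTheory.volume.restrict (Set.Ioi 0)) (x₀ := t)
        (F := fun τ s => gK τ s * φ s)
        (F' := fun τ s => gK τ s * (s^2/(2*τ^2) - 1/(2*τ)) * φ s)
        (bound := fun s => ((2*π*(t/2)) ^ (-(1:ℝ)/2) * C / t + 0 * s +
          (2 * (2*π*(t/2)) ^ (-(1:ℝ)/2) * C / t^2) * s^2) * Real.exp (-(1/(3*t)) * s^2))
        (Metric.ball_mem_nhds _ (by positivity)) ?_ I1 ?_ ?_ ?_ ?_).2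
      · exact Filter.Eventually.of_forall fun τ =>
          (((gK_cont τ).continuousOn.mul (hφc.mono Set.Ioi_subset_Ici_self)).aestronglyMeasurable
            measurableSet_Ioi)
      · exact ((((gK_cont t).mul
          (((continuous_pow 2).div_const _).sub continuous_const)).continuousOn.mul
          (hφc.mono Set.Ioi_subset_Ici_self)).aestronglyMeasurable measurableSet_Ioi)
      · rw [MeasureTheory.ae_restrict_iff' measurableSet_Ioi]
        refine MeasureTheory.ae_of_all _ fun s hs τ hτ => ?_
        obtain ⟨hb1, hb2⟩ := hballs τ hτ
        have hτpos : (0:ℝ) < τ := lt_trans (by positivity) hb1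
        have hs0 : (0:ℝ) < s := hs
        have e1 : gK τ s ≤ (2*π*(t/2)) ^ (-(1:ℝ)/2) * Real.exp (-(1/(3*t)) * s^2) := by
          simp only [gK]
          refine mul_le_mul ?_ ?_ (Real.exp_pos _).le hK'pos.le
          · exact Real.rpow_le_rpow_of_nonpos (by positivity)
              (by nlinarith [Real.pi_pos]) (by norm_num)
          · rw [Real.exp_le_exp]
            have h3 : s^2/(3*t) ≤ s^2/(2*τ) :=
              div_le_div_of_nonneg_left (by positivity) (by linarith) (by linarith)
            calc -s^2/(2*τ) = -(s^2/(2*τ)) := by ring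
              _ ≤ -(s^2/(3*t)) := neg_le_neg h3
              _ = -(1/(3*t)) * s^2 := by ring
        have e2 : |s^2/(2*τ^2) - 1/(2*τ)| ≤ 2*s^2/t^2 + 1/t := by
          have hp2 : (0:ℝ) ≤ 1/(2*τ) := le_of_lt (div_pos one_pos (by linarith))
          refine (abs_sub _ _).trans ?_
          rw [abs_of_nonneg (by positivity), abs_of_nonneg hp2]
          have q1 : s^2/(2*τ^2) ≤ 2*s^2/t^2 := by
            rw [div_le_div_iff₀ (by positivity) (by positivity)]
            nlinarith [sq_nonneg s, mul_nonneg (sq_nonneg s)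
              (mul_pos (by linarith : (0:ℝ) < 2*τ - t) (by linarith : (0:ℝ) < 2*τ + t)).le]
          have q2 : 1/(2*τ) ≤ 1/t := one_div_le_one_div_of_le ht (by linarith)
          linarith
        have e3 : |φ s| ≤ C := (hbd s (Set.mem_Ici.mpr (le_of_lt hs))).1
        have hKe : (0:ℝ) ≤ (2*π*(t/2)) ^ (-(1:ℝ)/2) * Real.exp (-(1/(3*t)) * s^2) :=
          (mul_pos hK'pos (Real.exp_pos _)).le
        have hpoly : (0:ℝ) ≤ 2*s^2/t^2 + 1/t := by positivity
        calc ‖gK τ s * (s^2/(2*τ^2) - 1/(2*τ)) * φ s‖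
            = gK τ s * |s^2/(2*τ^2) - 1/(2*τ)| * |φ s| := by
              rw [Real.norm_eq_abs, abs_mul, abs_mul, abs_of_pos (gK_pos hτpos s)]
          _ ≤ ((2*π*(t/2)) ^ (-(1:ℝ)/2) * Real.exp (-(1/(3*t)) * s^2)) * (2*s^2/t^2 + 1/t) * C :=
              mul_le_mul (mul_le_mul e1 e2 (abs_nonneg _) hKe) e3 (abs_nonneg _)
                (mul_nonneg hKe hpoly)
          _ = ((2*π*(t/2)) ^ (-(1:ℝ)/2) * C / t + 0 * s +
                (2 * (2*π*(t/2)) ^ (-(1:ℝ)/2) * C / t^2) * s^2) *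
                Real.exp (-(1/(3*t)) * s^2) := by
              ring
      · exact (int_poly_gauss (k := 1/(3*t)) (by positivity) _ _ _).integrableOn
      · refine MeasureTheory.ae_of_all _ fun s τ hτ => ?_
        have hτpos : (0:ℝ) < τ := lt_trans (by positivity) (hballs τ hτ).1
        exact (gK_hasDerivAt_t s hτpos).mul_const (φ s)
    have hc1 : ContinuousWithinAt (fun s => gK t s * (-s/t) * φ s) (Set.Ici 0) 0 :=
      (((gK_cont t).mul (continuous_id.neg.div_const t)).continuousWithinAt).mul
        ((hφ' 0 Set.self_mem_Ici).continuousWithinAt)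
    have hd1 : ∀ s ∈ Set.Ioi (0:ℝ), HasDerivAt (fun s => gK t s * (-s/t) * φ s)
        (gK t s * (s^2/t^2 - 1/t) * φ s + gK t s * (-s/t) * φ' s) s := fun s hs =>
      (gK_hasDerivAt_ss ht s).mul ((hφ' s (Set.mem_Ici.mpr (le_of_lt hs))).hasDerivAt (Ici_mem_nhds hs))
    have ht1 : Tendsto (fun s => gK t s * (-s/t) * φ s) atTop (nhds 0) := by
      refine squeeze_zero_norm' ?_ (tendsto_gauss_decay hkpos ((2*π*t) ^ (-(1:ℝ)/2) * C / t) 1)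
      filter_upwards [Filter.eventually_gt_atTop 0] with s hs
      have h1 : |φ s| ≤ C := (hbd s hs.le).1
      have habs : |(-s/t)| = s/t := by rw [neg_div, abs_neg, abs_of_pos (by positivity)]
      calc ‖gK t s * (-s/t) * φ s‖ = gK t s * (s/t) * |φ s| := by
            rw [Real.norm_eq_abs, abs_mul, abs_mul, abs_of_pos (gK_pos ht s), habs]
        _ ≤ gK t s * (s/t) * C :=
            mul_le_mul_of_nonneg_left h1 (mul_nonneg (gK_pos ht s).le (by positivity))
        _ = (2*π*t) ^ (-(1:ℝ)/2) * C / t * (s ^ (1:ℝ) * Real.exp (-(1/(2*t)) * s^2)) := by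
            rw [Real.rpow_one]; simp only [gK]; rw [← exp_arg_eq]; ring
    have hIBP1 := MeasureTheory.integral_Ioi_of_hasDerivAt_of_tendsto
      (f := fun s => gK t s * (-s/t) * φ s)
      (f' := fun s => gK t s * (s^2/t^2 - 1/t) * φ s + gK t s * (-s/t) * φ' s)
      (m := 0) hc1 hd1 (I3.add I2) ht1
    have hc2 : ContinuousWithinAt (fun s => gK t s * φ' s) (Set.Ici 0) 0 :=
      ((gK_cont t).continuousWithinAt).mul ((hφ'' 0 Set.self_mem_Ici).continuousWithinAt)
    have hd2 : ∀ s ∈ Set.Ioi (0:ℝ), HasDerivAt (fun s => gK t s * φ' s)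
        (gK t s * (-s/t) * φ' s + gK t s * φ'' s) s := fun s hs =>
      (gK_hasDerivAt_s ht s).mul ((hφ'' s (Set.mem_Ici.mpr (le_of_lt hs))).hasDerivAt (Ici_mem_nhds hs))
    have ht2 : Tendsto (fun s => gK t s * φ' s) atTop (nhds 0) := by
      refine squeeze_zero_norm' ?_ (tendsto_gauss_decay hkpos ((2*π*t) ^ (-(1:ℝ)/2) * C) 0)
      filter_upwards [Filter.eventually_gt_atTop 0] with s hs
      calc ‖gK t s * φ' s‖ = gK t s * |φ' s| := by
            rw [Real.norm_eq_abs, abs_mul, abs_of_pos (gK_pos ht s)]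
        _ ≤ gK t s * C := mul_le_mul_of_nonneg_left (hbd s hs.le).2.1 (gK_pos ht s).le
        _ = (2*π*t) ^ (-(1:ℝ)/2) * C * (s ^ (0:ℝ) * Real.exp (-(1/(2*t)) * s^2)) := by
            rw [Real.rpow_zero, one_mul]; simp only [gK]; rw [← exp_arg_eq]; ring
    have hIBP2 := MeasureTheory.integral_Ioi_of_hasDerivAt_of_tendsto
      (f := fun s => gK t s * φ' s)
      (f' := fun s => gK t s * (-s/t) * φ' s + gK t s * φ'' s)
      (m := 0) hc2 hd2 (I2.add I4) ht2
    rw [MeasureTheory.integral_add I3 I2] at hIBP1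
    rw [MeasureTheory.integral_add I2 I4] at hIBP2
    simp only [neg_zero, zero_div, mul_zero, zero_mul, zero_sub, sub_zero, neg_neg] at hIBP1 hIBP2
    have hA : (∫ s in Set.Ioi (0:ℝ), gK t s * (s^2/t^2 - 1/t) * φ s)
        = gK t 0 * φ' 0 + ∫ s in Set.Ioi (0:ℝ), gK t s * φ'' s := by linarith
    have hu2 : HasDerivAt u
        (2 * ∫ s in Set.Ioi (0:ℝ), gK t s * (s^2/(2*t^2) - 1/(2*t)) * φ s) t := by
      refine (HasDerivAt.const_mul (2:ℝ) hparam).congr_of_eventuallyEq ?_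
      filter_upwards [Ioi_mem_nhds ht] with τ hτ
      exact hu τ hτ
    have h2 : (2:ℝ) * (∫ s in Set.Ioi (0:ℝ), gK t s * (s^2/(2*t^2) - 1/(2*t)) * φ s)
        = ∫ s in Set.Ioi (0:ℝ), gK t s * (s^2/t^2 - 1/t) * φ s := by
      rw [← MeasureTheory.integral_const_mul]
      exact MeasureTheory.integral_congr_ae (MeasureTheory.ae_of_all _ fun s => by ring)
    have hgK0 : gK t 0 = (Real.sqrt (2*π*t))⁻¹ := by
      have e0 : gK t 0 = (2*π*t) ^ (-(1:ℝ)/2) := by simp [gK]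
      rw [e0, show (-(1:ℝ)/2) = -(1/2:ℝ) by norm_num,
        Real.rpow_neg (by positivity : (0:ℝ) ≤ 2*π*t), ← Real.sqrt_eq_rpow]
    have hval : 2 * (∫ s in Set.Ioi (0:ℝ), gK t s * (s^2/(2*t^2) - 1/(2*t)) * φ s)
        = φ' 0 / Real.sqrt (2*π*t) + ∫ s in Set.Ioi (0:ℝ), gK t s * φ'' s := by
      rw [h2, hA, hgK0, inv_mul_eq_div]
    rw [hval] at hu2
    exact hu2
  · have hint : Tendsto (fun t => ∫ r in Set.Ioi (0:ℝ),
        (2*π) ^ (-(1:ℝ)/2) * Real.exp (-r^2/2) * φ (Real.sqrt t * r)) (nhdsWithin 0 (Set.Ioi 0))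
        (nhds (∫ r in Set.Ioi (0:ℝ), (2*π) ^ (-(1:ℝ)/2) * Real.exp (-r^2/2) * φ 0)) := by
      refine MeasureTheory.tendsto_integral_filter_of_dominated_convergence
        (bound := fun r => (2*π) ^ (-(1:ℝ)/2) * Real.exp (-r^2/2) * C) ?_ ?_ ?_ ?_
      · refine Filter.Eventually.of_forall fun t => ?_
        refine ContinuousOn.aestronglyMeasurable ?_ measurableSet_Ioi
        refine ((continuous_const.mul (Real.continuous_exp.comp
          ((continuous_pow 2).neg.div_const 2))).continuousOn).mul ?_
        exact hφc.comp (continuous_const.mul continuous_id).continuousOn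
          fun r hr => mul_nonneg (Real.sqrt_nonneg _) (le_of_lt hr)
      · refine Filter.Eventually.of_forall fun t => ?_
        rw [MeasureTheory.ae_restrict_iff' measurableSet_Ioi]
        refine MeasureTheory.ae_of_all _ fun r hr => ?_
        have h1 : |φ (Real.sqrt t * r)| ≤ C :=
          (hbd _ (mul_nonneg (Real.sqrt_nonneg _) (le_of_lt hr))).1
        have hpos : (0:ℝ) < (2*π) ^ (-(1:ℝ)/2) * Real.exp (-r^2/2) :=
          mul_pos (Real.rpow_pos_of_pos (by positivity) _) (Real.exp_pos _)
        rw [Real.norm_eq_abs, abs_mul, abs_of_pos hpos]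
        exact mul_le_mul_of_nonneg_left h1 hpos.le
      · have h := ((integrable_exp_neg_mul_sq (by norm_num : (0:ℝ) < 1/2)).const_mul
          ((2*π) ^ (-(1:ℝ)/2))).mul_const C
        refine Integrable.integrableOn (h.congr (MeasureTheory.ae_of_all _ fun r => ?_))
        show (2*π) ^ (-(1:ℝ)/2) * Real.exp (-(1/2:ℝ) * r^2) * C
            = (2*π) ^ (-(1:ℝ)/2) * Real.exp (-r^2/2) * C
        rw [show (-(1/2:ℝ)) * r^2 = -r^2/2 by ring]
      · rw [MeasureTheory.ae_restrict_iff' measurableSet_Ioi]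
        refine MeasureTheory.ae_of_all _ fun r hr => ?_
        have hs : Tendsto (fun t : ℝ => Real.sqrt t * r) (nhdsWithin 0 (Set.Ioi 0))
            (nhdsWithin 0 (Set.Ici 0)) := by
          apply tendsto_nhdsWithin_of_tendsto_nhds_of_eventually_within
          · have h0 : Tendsto Real.sqrt (nhds 0) (nhds 0) := by
              simpa using (Real.continuous_sqrt.tendsto 0)
            have h : Tendsto (fun x : ℝ => Real.sqrt x * r) (nhdsWithin 0 (Set.Ioi 0))
                (nhds (0 * r)) :=
              (h0.mono_left (nhdsWithin_le_nhds (s := Set.Ioi 0))).mul_const r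
            simpa using h
          · exact Filter.Eventually.of_forall fun t =>
              mul_nonneg (Real.sqrt_nonneg _) (le_of_lt hr)
        have hφtend : Tendsto (fun t : ℝ => φ (Real.sqrt t * r)) (nhdsWithin 0 (Set.Ioi 0))
            (nhds (φ 0)) := ((hφ' 0 Set.self_mem_Ici).continuousWithinAt.tendsto).comp hs
        exact hφtend.const_mul _
    have hcompute : (∫ r in Set.Ioi (0:ℝ), (2*π) ^ (-(1:ℝ)/2) * Real.exp (-r^2/2) * φ 0)
        = φ 0 / 2 := by
      have efun : (fun r : ℝ => (2*π) ^ (-(1:ℝ)/2) * Real.exp (-r^2/2) * φ 0)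
          = fun r : ℝ => ((2*π) ^ (-(1:ℝ)/2) * φ 0) * Real.exp (-(1/2:ℝ) * r^2) := by
        funext r
        rw [show (-(1/2:ℝ)) * r^2 = -r^2/2 by ring]
        ring
      rw [efun, MeasureTheory.integral_const_mul, integral_gaussian_Ioi,
        show π/(1/2:ℝ) = 2*π by ring]
      have hA2 : (2*π) ^ (-(1:ℝ)/2) = (Real.sqrt (2*π))⁻¹ := by
        rw [show (-(1:ℝ)/2) = -(1/2:ℝ) by norm_num,
          Real.rpow_neg (by positivity : (0:ℝ) ≤ 2*π), ← Real.sqrt_eq_rpow]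
      rw [hA2]
      have hne : Real.sqrt (2*π) ≠ 0 := ne_of_gt (Real.sqrt_pos.mpr (by positivity))
      field_simp
    have h2 := hint.const_mul (2:ℝ)
    rw [hcompute, show (2:ℝ) * (φ 0 / 2) = φ 0 by ring] at h2
    refine Tendsto.congr' ?_ h2
    filter_upwards [self_mem_nhdsWithin] with t htpos
    have ht0 : (0:ℝ) < t := htpos
    rw [hu t ht0]
    congr 1
    have htsq : (0:ℝ) < Real.sqrt t := Real.sqrt_pos.mpr ht0
    have hcv : (∫ x in Set.Ioi (0:ℝ),
        (2*π*t) ^ (-(1:ℝ)/2) * Real.exp (-(Real.sqrt t * x)^2/(2*t)) * φ (Real.sqrt t * x))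
        = (Real.sqrt t)⁻¹ * ∫ s in Set.Ioi (0:ℝ),
            (2*π*t) ^ (-(1:ℝ)/2) * Real.exp (-s^2/(2*t)) * φ s := by
      have h := MeasureTheory.integral_comp_mul_left_Ioi
        (fun s => (2*π*t) ^ (-(1:ℝ)/2) * Real.exp (-s^2/(2*t)) * φ s) 0 htsq
      simpa using h
    have hpoint : ∀ r : ℝ, (2*π) ^ (-(1:ℝ)/2) * Real.exp (-r^2/2) * φ (Real.sqrt t * r)
        = Real.sqrt t * ((2*π*t) ^ (-(1:ℝ)/2) *
            Real.exp (-(Real.sqrt t * r)^2/(2*t)) * φ (Real.sqrt t * r)) := by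
      intro r
      have e1 : (Real.sqrt t * r)^2 = t * r^2 := by rw [mul_pow, Real.sq_sqrt ht0.le]
      have e2 : -(t * r^2)/(2*t) = -r^2/2 := by
        rw [div_eq_div_iff (mul_ne_zero two_ne_zero ht0.ne') two_ne_zero]
        ring
      have e3 : Real.sqrt t * (2*π*t) ^ (-(1:ℝ)/2) = (2*π) ^ (-(1:ℝ)/2) := by
        rw [Real.mul_rpow (by positivity : (0:ℝ) ≤ 2*π) ht0.le,
          show (-(1:ℝ)/2) = -(1/2:ℝ) by norm_num, Real.rpow_neg ht0.le, ← Real.sqrt_eq_rpow]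
        field_simp
      rw [e1, e2, ← e3]
      ring
    calc (∫ r in Set.Ioi (0:ℝ), (2*π) ^ (-(1:ℝ)/2) * Real.exp (-r^2/2) * φ (Real.sqrt t * r))
        = ∫ r in Set.Ioi (0:ℝ), Real.sqrt t * ((2*π*t) ^ (-(1:ℝ)/2) *
            Real.exp (-(Real.sqrt t * r)^2/(2*t)) * φ (Real.sqrt t * r)) :=
          MeasureTheory.integral_congr_ae (MeasureTheory.ae_of_all _ fun r => hpoint r)
      _ = Real.sqrt t * ∫ r in Set.Ioi (0:ℝ), (2*π*t) ^ (-(1:ℝ)/2) *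
            Real.exp (-(Real.sqrt t * r)^2/(2*t)) * φ (Real.sqrt t * r) :=
          MeasureTheory.integral_const_mul _ _
      _ = Real.sqrt t * ((Real.sqrt t)⁻¹ * ∫ s in Set.Ioi (0:ℝ),
            (2*π*t) ^ (-(1:ℝ)/2) * Real.exp (-s^2/(2*t)) * φ s) := by rw [hcv]
      _ = ∫ s in Set.Ioi (0:ℝ), (2*π*t) ^ (-(1:ℝ)/2) * Real.exp (-s^2/(2*t)) * φ s := by
          rw [← mul_assoc, mul_inv_cancel₀ htsq.ne', one_mul]


end
end

section
/- For every x ∈ G, almost surely Τ_G^x = inf{ t ≥ 0 : |B(t)| ≥ τ_G^x } = inf{ t ≥ 0 : B(t) ∉ (−τ_G^x, τ_G^x) }; that is, the first exit time of the Brownian-time Brownian motion from G equals the first exit time of the time-Brownian motion B from the random symmetric interval (−τ_G^x, τ_G^x). -/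
open MeasureTheory ProbabilityTheory Real Filter
open scoped NNReal ENNReal

noncomputable section

/-- For `x ∈ G`, almost surely the first exit time of the Brownian-time
Brownian motion from `G` equals `inf{t ≥ 0 : |B t| ≥ τ_G^x}`, which equals the first exit
time of `B` from the random symmetric interval `(−τ_G^x, τ_G^x)`. -/
theorem stmt5 {Ω : Type*} [MeasurableSpace Ω] (d : ℕ) (P : Measure Ω) [IsProbabilityMeasure P]
    (B : Ω → ℝ → ℝ) (X : EuclideanSpace ℝ (Fin d) → Ω → ℝ → EuclideanSpace ℝ (Fin d))
    (hB : IsBM1 P B) (hX : ∀ x, IsBMd d P (X x) x)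
    (hind : ∀ x, IndepFun B (X x) P)
    (G : Set (EuclideanSpace ℝ (Fin d))) (hGopen : IsOpen G)
    (hGbdd : Bornology.IsBounded G)
    (x : EuclideanSpace ℝ (Fin d)) (hx : x ∈ G) :
    ∀ᵐ ω ∂P,
      TauExit B (X x) G ω = sInf {t : ℝ | 0 ≤ t ∧ tauExit (X x) G ω ≤ |B ω t|} ∧
      TauExit B (X x) G ω =
        sInf {t : ℝ | 0 ≤ t ∧ B ω t ∉ Set.Ioo (-(tauExit (X x) G ω)) (tauExit (X x) G ω)} := by
  refine ae_of_all P fun ω => ?_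
  have hXc : ContinuousOn (X x ω) (Set.Ici 0) := (hX x).cont ω
  have hBc : ContinuousOn (B ω) (Set.Ici 0) := hB.cont ω
  have hB0 : B ω 0 = 0 := hB.init ω
  have hX0 : X x ω 0 = x := (hX x).init ω
  set τ := tauExit (X x) G ω with hτdef
  set S : Set ℝ := {s : ℝ | 0 ≤ s ∧ X x ω s ∉ G} with hSdef
  have hτS : τ = sInf S := rfl
  have habsBc : ContinuousOn (fun t => |B ω t|) (Set.Ici 0) :=
    continuous_abs.comp_continuousOn hBc
  -- second conjunct set equals first conjunct set
  have hsetCD : {t : ℝ | 0 ≤ t ∧ τ ≤ |B ω t|} =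
      {t : ℝ | 0 ≤ t ∧ B ω t ∉ Set.Ioo (-τ) τ} := by
    ext t
    simp only [Set.mem_setOf_eq, Set.mem_Ioo, not_and_or, not_lt, ← abs_lt, not_lt]
  have main : TauExit B (X x) G ω = sInf {t : ℝ | 0 ≤ t ∧ τ ≤ |B ω t|} := by
    rcases Set.eq_empty_or_nonempty S with hS | hS
    · -- the process never exits G
      have hτ0 : τ = 0 := by rw [hτS, hS, Real.sInf_empty]
      have hin : ∀ s : ℝ, 0 ≤ s → X x ω s ∈ G := by
        intro s hs
        by_contra hns
        exact Set.eq_empty_iff_forall_notMem.mp hS s ⟨hs, hns⟩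
      have hA : {t : ℝ | 0 ≤ t ∧ X x ω (|B ω t|) ∉ G} = (∅ : Set ℝ) := by
        ext t
        simp only [Set.mem_setOf_eq, Set.mem_empty_iff_false, iff_false, not_and, not_not]
        exact fun _ => hin _ (abs_nonneg _)
      have hC : {t : ℝ | 0 ≤ t ∧ τ ≤ |B ω t|} = Set.Ici (0 : ℝ) := by
        ext t
        simp [hτ0, abs_nonneg]
      rw [TauExit, hA, hC, Real.sInf_empty, csInf_Ici]
    · -- the process does exit G
      have hSbdd : BddBelow S := ⟨0, fun s hs => hs.1⟩
      have hSclosed : IsClosed S := by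
        have : S = Set.Ici (0 : ℝ) ∩ (X x ω) ⁻¹' Gᶜ := by
          ext s; simp [hSdef, Set.mem_Ici, and_comm]
        rw [this]
        exact hXc.preimage_isClosed_of_isClosed isClosed_Ici hGopen.isClosed_compl
      have hτmem : τ ∈ S := hSclosed.csInf_mem hS hSbdd
      have hτnonneg : (0 : ℝ) ≤ τ := hτmem.1
      have hXτ : X x ω τ ∉ G := hτmem.2
      have hbefore : ∀ s : ℝ, 0 ≤ s → s < τ → X x ω s ∈ G := by
        intro s hs hsτ
        by_contra hns
        exact absurd (csInf_le hSbdd ⟨hs, hns⟩) (not_le.mpr hsτ)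
      have hτpos : 0 < τ := by
        rcases lt_or_eq_of_le hτnonneg with h | h
        · exact h
        · exfalso; apply hXτ; rw [← h, hX0]; exact hx
      set A : Set ℝ := {t : ℝ | 0 ≤ t ∧ X x ω (|B ω t|) ∉ G} with hAdef
      set C : Set ℝ := {t : ℝ | 0 ≤ t ∧ τ ≤ |B ω t|} with hCdef
      have hAC : A ⊆ C := by
        rintro t ⟨ht, hXt⟩
        exact ⟨ht, csInf_le hSbdd ⟨abs_nonneg _, hXt⟩⟩
      have hCbdd : BddBelow C := ⟨0, fun t ht => ht.1⟩
      have hAbdd : BddBelow A := ⟨0, fun t ht => ht.1⟩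
      rcases Set.eq_empty_or_nonempty C with hC | hC
      · have hA : A = ∅ := Set.eq_empty_iff_forall_notMem.mpr
          fun t ht => Set.eq_empty_iff_forall_notMem.mp hC t (hAC ht)
        rw [TauExit, ← hAdef, hA, hC]
      · have hCclosed : IsClosed C := by
          have : C = Set.Ici (0 : ℝ) ∩ (fun t => |B ω t|) ⁻¹' Set.Ici τ := by
            ext t; simp [hCdef, Set.mem_Ici]
          rw [this]
          exact habsBc.preimage_isClosed_of_isClosed isClosed_Ici isClosed_Ici
        set t₀ := sInf C with ht₀
        have ht₀mem : t₀ ∈ C := hCclosed.csInf_mem hC hCbdd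
        have ht₀nonneg : (0 : ℝ) ≤ t₀ := ht₀mem.1
        have ht₀ge : τ ≤ |B ω t₀| := ht₀mem.2
        have hBt₀ : |B ω t₀| = τ := by
          by_contra hne
          have hlt : τ < |B ω t₀| := lt_of_le_of_ne ht₀ge (Ne.symm hne)
          have hcont : ContinuousOn (fun t => |B ω t|) (Set.Icc 0 t₀) :=
            habsBc.mono (Set.Icc_subset_Ici_self)
          have hivt := intermediate_value_Icc ht₀nonneg hcont
          have hτIcc : τ ∈ Set.Icc (|B ω 0|) (|B ω t₀|) := by
            constructor
            · rw [hB0, abs_zero]; exact hτnonneg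
            · exact ht₀ge
          obtain ⟨s, hsIcc, hsval⟩ := hivt hτIcc
          have hsC : s ∈ C := ⟨hsIcc.1, le_of_eq hsval.symm⟩
          have : t₀ ≤ s := csInf_le hCbdd hsC
          have hst : s = t₀ := le_antisymm hsIcc.2 this
          rw [hst] at hsval
          exact hne hsval
        have ht₀A : t₀ ∈ A := ⟨ht₀nonneg, by rw [hBt₀]; exact hXτ⟩
        have hAne : A.Nonempty := ⟨t₀, ht₀A⟩
        have h1 : sInf C ≤ sInf A := csInf_le_csInf hCbdd hAne hAC
        have h2 : sInf A ≤ sInf C := csInf_le hAbdd ht₀A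
        rw [TauExit, ← hAdef]
        exact le_antisymm h2 h1
  exact ⟨main, by rw [main, hsetCD]⟩

end
end

section
/- Fix f ∈ C_c²(ℝ^d; ℝ) (twice continuously differentiable with compact support) and x₀, ξ ∈ ℝ^d. There exist constants c₂ > 0 and c₃ > 0 such that for all 0 < s < t: (t−s)^{-1} [ ∫_{ℝ^d} (g_s(x₀,η) g_{t−s}(η,ξ) / g_t(x₀,ξ)) f(η) dη − f(ξ) ] ≤ c₃ (1 + t^{-c₂}). -/
open MeasureTheory ProbabilityTheory Real Filter
open scoped NNReal ENNReal

noncomputable section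

namespace Stmt13Aux

open MeasureTheory Real

/-! ### One-dimensional Gaussian facts -/

/-- One-dimensional centered Gaussian density with variance `v`. -/
def g1 (v y : ℝ) : ℝ := (2 * π * v) ^ (-(1:ℝ)/2) * Real.exp (-y ^ 2 / (2 * v))

lemma g1_eq {v : ℝ} (y : ℝ) :
    g1 v y = (2 * π * v) ^ (-(1:ℝ)/2) * Real.exp (-(2*v)⁻¹ * y^2) := by
  unfold g1
  congr 2
  by_cases h : v = 0
  · simp [h]
  · field_simp

lemma norm_const {v : ℝ} (hv : 0 < v) :
    (2 * π * v) ^ (-(1:ℝ)/2) * Real.sqrt (2 * π * v) = 1 := by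
  have h : (0:ℝ) < 2 * π * v := by positivity
  rw [Real.sqrt_eq_rpow, ← Real.rpow_add h]
  norm_num

lemma integrable_g1 {v : ℝ} (hv : 0 < v) : Integrable (g1 v) := by
  have hb : (0:ℝ) < (2*v)⁻¹ := by positivity
  have h : g1 v = fun y => (2 * π * v) ^ (-(1:ℝ)/2) * Real.exp (-(2*v)⁻¹ * y^2) :=
    funext g1_eq
  rw [h]
  exact (integrable_exp_neg_mul_sq hb).const_mul _

lemma pi_div_b {v : ℝ} (hv : 0 < v) : π / (2*v)⁻¹ = 2 * π * v := by
  field_simp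

lemma integral_g1 {v : ℝ} (hv : 0 < v) : ∫ y, g1 v y = 1 := by
  have hb : (0:ℝ) < (2*v)⁻¹ := by positivity
  simp_rw [g1_eq, integral_const_mul, integral_gaussian, pi_div_b hv]
  exact norm_const hv

lemma integrable_g1_mul_sq {v : ℝ} (hv : 0 < v) :
    Integrable (fun y => g1 v y * y^2) := by
  have hb : (0:ℝ) < (2*v)⁻¹ := by positivity
  have h2 : Integrable (fun y : ℝ => y^2 * Real.exp (-(2*v)⁻¹ * y^2)) := by
    have := integrable_rpow_mul_exp_neg_mul_sq hb (s := 2) (by norm_num)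
    simpa [Real.rpow_natCast] using this
  have h : (fun y => g1 v y * y^2)
      = fun y => (2 * π * v) ^ (-(1:ℝ)/2) * (y^2 * Real.exp (-(2*v)⁻¹ * y^2)) := by
    funext y; rw [g1_eq]; ring
  rw [h]
  exact h2.const_mul _

lemma integral_sq_exp {v : ℝ} (hv : 0 < v) :
    ∫ y : ℝ, y^2 * Real.exp (-(2*v)⁻¹ * y^2) = Real.sqrt (2 * π * v) * v := by
  set b : ℝ := (2*v)⁻¹ with hbdef
  have hb : (0:ℝ) < b := by positivity
  have hasD : ∀ x : ℝ, HasDerivAt (fun x : ℝ => x * Real.exp (-b * x^2))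
      (Real.exp (-b * x^2) - 2*b*(x^2 * Real.exp (-b * x^2))) x := by
    intro x
    have h1 : HasDerivAt (fun x : ℝ => -b * x^2) (-b * (2 * x)) x := by
      simpa using ((hasDerivAt_pow 2 x).const_mul (-b))
    have h2 := h1.exp
    have h3 : HasDerivAt (fun x : ℝ => x * Real.exp (-b * x^2))
        (1 * Real.exp (-b * x^2) + x * (Real.exp (-b * x^2) * (-b * (2 * x)))) x :=
      (hasDerivAt_id x).mul h2
    convert h3 using 1
    ring
  have hint2 : Integrable (fun y : ℝ => y^2 * Real.exp (-b * y^2)) := by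
    have := integrable_rpow_mul_exp_neg_mul_sq hb (s := 2) (by norm_num)
    simpa [Real.rpow_natCast] using this
  have hF' : Integrable (fun x : ℝ =>
      Real.exp (-b * x^2) - 2*b*(x^2 * Real.exp (-b * x^2))) :=
    (integrable_exp_neg_mul_sq hb).sub (hint2.const_mul _)
  have hzero := integral_eq_zero_of_hasDerivAt_of_integrable hasD hF'
    (integrable_mul_exp_neg_mul_sq hb)
  rw [integral_sub (integrable_exp_neg_mul_sq hb) (hint2.const_mul _),
    integral_const_mul, integral_gaussian, pi_div_b hv] at hzero
  have h2b : 2 * b = v⁻¹ := by rw [hbdef]; field_simp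
  have hvne : v ≠ 0 := ne_of_gt hv
  rw [h2b] at hzero
  have : v⁻¹ * ∫ y : ℝ, y^2 * Real.exp (-b * y^2) = Real.sqrt (2 * π * v) := by linarith
  calc ∫ y : ℝ, y^2 * Real.exp (-b * y^2)
      = v * (v⁻¹ * ∫ y : ℝ, y^2 * Real.exp (-b * y^2)) := by rw [mul_inv_cancel_left₀ hvne]
    _ = Real.sqrt (2 * π * v) * v := by rw [this]; ring

lemma integral_g1_mul_sq {v : ℝ} (hv : 0 < v) : ∫ y, g1 v y * y^2 = v := by
  have h : (fun y => g1 v y * y^2)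
      = fun y => (2 * π * v) ^ (-(1:ℝ)/2) * (y^2 * Real.exp (-(2*v)⁻¹ * y^2)) := by
    funext y; rw [g1_eq]; ring
  rw [h, integral_const_mul, integral_sq_exp hv, ← mul_assoc, norm_const hv, one_mul]

/-! ### Multidimensional Gaussian facts -/

variable {d : ℕ}

lemma normsq (x : EuclideanSpace ℝ (Fin d)) : ‖x‖^2 = ∑ i, (x i)^2 := by
  rw [EuclideanSpace.norm_eq]
  rw [Real.sq_sqrt (by positivity)]
  simp [Real.norm_eq_abs, sq_abs]

lemma hk_pos {s : ℝ} (hs : 0 < s) (x y : EuclideanSpace ℝ (Fin d)) :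
    0 < heatKernel d s x y := by
  unfold heatKernel
  have h : (0:ℝ) < 2 * π * s := by positivity
  positivity

lemma hk_cont (s : ℝ) (x : EuclideanSpace ℝ (Fin d)) :
    Continuous (fun η => heatKernel d s x η) := by
  unfold heatKernel
  fun_prop

lemma hk_prod {v : ℝ} (hv : 0 < v) (m η : EuclideanSpace ℝ (Fin d)) :
    heatKernel d v m η = ∏ i, g1 v (m i - η i) := by
  have h : (0:ℝ) < 2 * π * v := by positivity
  unfold heatKernel g1
  rw [normsq (m - η), Finset.prod_mul_distrib]
  congr 1
  · rw [Finset.prod_const, Finset.card_univ, Fintype.card_fin,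
      ← Real.rpow_natCast ((2*π*v) ^ (-(1:ℝ)/2)) d, ← Real.rpow_mul h.le]
    congr 1
    ring
  · rw [← Real.exp_sum]
    congr 1
    rw [show (∑ i, ((m - η) i) ^ 2) = ∑ i, (m i - η i)^2 from rfl]
    rw [neg_div, Finset.sum_div, ← Finset.sum_neg_distrib]
    simp [neg_div]

lemma integral_eucl_prod (G : Fin d → ℝ → ℝ) :
    ∫ η : EuclideanSpace ℝ (Fin d), ∏ i, G i (η i) = ∏ i, ∫ y, G i y := by
  rw [← ((EuclideanSpace.volume_preserving_symm_measurableEquiv_toLp (Fin d)).symm).integral_comp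
      (MeasurableEquiv.measurableEmbedding _)]
  simp
  exact integral_fintype_prod_eq_prod G

lemma integrable_eucl_prod (G : Fin d → ℝ → ℝ) (hG : ∀ i, Integrable (G i)) :
    Integrable (fun η : EuclideanSpace ℝ (Fin d) => ∏ i, G i (η i)) := by
  have h := (EuclideanSpace.volume_preserving_symm_measurableEquiv_toLp (Fin d)).symm
  rw [← h.integrable_comp_emb (MeasurableEquiv.measurableEmbedding _)]
  simp [Function.comp_def]
  exact Integrable.fintype_prod hG

variable {v : ℝ} {m : EuclideanSpace ℝ (Fin d)}

lemma hk_integrable (hv : 0 < v) : Integrable (fun η => heatKernel d v m η) := by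
  have h : (fun η : EuclideanSpace ℝ (Fin d) => heatKernel d v m η)
      = fun η => ∏ i, (fun y => g1 v (m i - y)) (η i) := funext fun η => hk_prod hv m η
  rw [h]
  exact integrable_eucl_prod (fun i y => g1 v (m i - y))
    fun i => (integrable_g1 hv).comp_sub_left (m i)

lemma hk_integral_one (hv : 0 < v) : ∫ η, heatKernel d v m η = 1 := by
  have h : (fun η : EuclideanSpace ℝ (Fin d) => heatKernel d v m η)
      = fun η => ∏ i, (fun y => g1 v (m i - y)) (η i) := funext fun η => hk_prod hv m η
  rw [h, integral_eucl_prod (fun i y => g1 v (m i - y))]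
  have : ∀ i : Fin d, (∫ y, g1 v (m i - y)) = 1 := by
    intro i
    rw [integral_sub_left_eq_self (g1 v) volume (m i)]
    exact integral_g1 hv
  simp [this]

lemma hk_reflection (hv : 0 < v) (η : EuclideanSpace ℝ (Fin d)) :
    heatKernel d v m ((m + m) - η) = heatKernel d v m η := by
  unfold heatKernel
  congr 3
  rw [show m - (m + m - η) = η - m by abel, norm_sub_rev]

lemma hk_linear_moment (hv : 0 < v) (L : EuclideanSpace ℝ (Fin d) →L[ℝ] ℝ) :
    ∫ η, heatKernel d v m η * L (η - m) = 0 := by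
  set f : EuclideanSpace ℝ (Fin d) → ℝ := fun η => heatKernel d v m η * L (η - m) with hf
  have key : ∀ η, f ((m + m) - η) = -f η := by
    intro η
    simp only [hf]
    rw [hk_reflection hv η, show (m + m) - η - m = -(η - m) by abel, map_neg]
    ring
  have h1 : ∫ η, f ((m + m) - η) = ∫ η, f η := integral_sub_left_eq_self f volume (m + m)
  simp_rw [key] at h1
  rw [integral_neg] at h1
  linarith

lemma hk_sq_term_eq (hv : 0 < v) (i : Fin d) (η : EuclideanSpace ℝ (Fin d)) :
    heatKernel d v m η * (η i - m i)^2
      = ∏ j, (fun y => g1 v (m j - y) * (if j = i then (y - m i)^2 else 1)) (η j) := by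
  simp only
  rw [Finset.prod_mul_distrib, ← hk_prod hv m η]
  congr 1
  rw [Finset.prod_ite_eq' Finset.univ i (fun j => (η j - m i)^2)]
  simp

lemma int_g1_shift_sq (hv : 0 < v) (c : ℝ) :
    ∫ y, g1 v (c - y) * (y - c)^2 = v := by
  have h : (fun y => g1 v (c - y) * (y - c)^2)
      = fun y => (fun x => g1 v x * x^2) (c - y) := by
    funext y; simp only; ring_nf
  rw [h, integral_sub_left_eq_self (fun x => g1 v x * x^2) volume c]
  exact integral_g1_mul_sq hv

lemma integrable_g1_shift_sq (hv : 0 < v) (c : ℝ) :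
    Integrable (fun y => g1 v (c - y) * (y - c)^2) := by
  have h : (fun y => g1 v (c - y) * (y - c)^2)
      = fun y => (fun x => g1 v x * x^2) (c - y) := by
    funext y; simp only; ring_nf
  rw [h]
  exact (integrable_g1_mul_sq hv).comp_sub_left c

lemma hk_sq_term_integrable (hv : 0 < v) (i : Fin d) :
    Integrable (fun η : EuclideanSpace ℝ (Fin d) => heatKernel d v m η * (η i - m i)^2) := by
  have h : (fun η : EuclideanSpace ℝ (Fin d) => heatKernel d v m η * (η i - m i)^2)
      = fun η => ∏ j, (fun y => g1 v (m j - y) * (if j = i then (y - m i)^2 else 1)) (η j) :=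
    funext fun η => hk_sq_term_eq hv i η
  rw [h]
  refine integrable_eucl_prod (fun j y => g1 v (m j - y) * (if j = i then (y - m i)^2 else 1))
    fun j => ?_
  by_cases hji : j = i
  · subst hji
    simp only [if_pos rfl]
    exact integrable_g1_shift_sq hv (m j)
  · simp only [if_neg hji, mul_one]
    exact (integrable_g1 hv).comp_sub_left (m j)

lemma hk_sq_moment (hv : 0 < v) :
    ∫ η, heatKernel d v m η * ‖η - m‖^2 = d * v := by
  have hns : ∀ η : EuclideanSpace ℝ (Fin d), ‖η - m‖^2 = ∑ i, (η i - m i)^2 := by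
    intro η
    rw [normsq (η - m)]
    rfl
  calc ∫ η, heatKernel d v m η * ‖η - m‖^2
      = ∫ η, ∑ i, heatKernel d v m η * (η i - m i)^2 := by
        congr 1; funext η; rw [hns η, Finset.mul_sum]
    _ = ∑ i, ∫ η, heatKernel d v m η * (η i - m i)^2 :=
        integral_finset_sum _ fun i _ => hk_sq_term_integrable hv i
    _ = ∑ _i : Fin d, (v : ℝ) := by
        refine Finset.sum_congr rfl fun i _ => ?_
        have h : (fun η : EuclideanSpace ℝ (Fin d) => heatKernel d v m η * (η i - m i)^2)
            = fun η => ∏ j, (fun y => g1 v (m j - y) * (if j = i then (y - m i)^2 else 1)) (η j) :=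
          funext fun η => hk_sq_term_eq hv i η
        rw [h, integral_eucl_prod (fun j y => g1 v (m j - y) * (if j = i then (y - m i)^2 else 1))]
        have hval : ∀ j : Fin d,
            (∫ y, g1 v (m j - y) * (if j = i then (y - m i)^2 else 1))
              = if j = i then v else 1 := by
          intro j
          by_cases hji : j = i
          · subst hji
            simp only [if_pos rfl]
            exact int_g1_shift_sq hv (m j)
          · simp only [if_neg hji, mul_one]
            rw [integral_sub_left_eq_self (g1 v) volume (m j)]
            exact integral_g1 hv
        simp only [hval]
        rw [Finset.prod_ite_eq' Finset.univ i (fun _ => v)]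
        simp
    _ = d * v := by simp [Finset.sum_const, Finset.card_univ]

lemma hk_integrable_sq (hv : 0 < v) :
    Integrable (fun η : EuclideanSpace ℝ (Fin d) => heatKernel d v m η * ‖η - m‖^2) := by
  have hns : ∀ η : EuclideanSpace ℝ (Fin d), ‖η - m‖^2 = ∑ i, (η i - m i)^2 := by
    intro η
    rw [normsq (η - m)]
    rfl
  have h : (fun η : EuclideanSpace ℝ (Fin d) => heatKernel d v m η * ‖η - m‖^2)
      = fun η => ∑ i, heatKernel d v m η * (η i - m i)^2 := by
    funext η; rw [hns η, Finset.mul_sum]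
  rw [h]
  exact integrable_finset_sum _ fun i _ => hk_sq_term_integrable hv i

/-! ### The Brownian bridge identity -/

lemma bridge_identity {s t : ℝ} (hs : 0 < s) (hst : s < t)
    (x₀ ξ η : EuclideanSpace ℝ (Fin d)) :
    heatKernel d s x₀ η * heatKernel d (t - s) η ξ / heatKernel d t x₀ ξ
      = heatKernel d (s * (t - s) / t) (x₀ + (s / t) • (ξ - x₀)) η := by
  have ht : (0:ℝ) < t := hs.trans hst
  have hts : (0:ℝ) < t - s := sub_pos.mpr hst
  have hv : (0:ℝ) < s * (t - s) / t := by positivity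
  set m : EuclideanSpace ℝ (Fin d) := x₀ + (s / t) • (ξ - x₀) with hm
  have key : (t - s) * ‖x₀ - η‖^2 + s * ‖η - ξ‖^2
      = t * ‖m - η‖^2 + (s * (t - s) / t) * ‖x₀ - ξ‖^2 := by
    rw [normsq (x₀ - η), normsq (η - ξ), normsq (m - η), normsq (x₀ - ξ)]
    simp only [Finset.mul_sum]
    rw [← Finset.sum_add_distrib, ← Finset.sum_add_distrib]
    refine Finset.sum_congr rfl fun i _ => ?_
    have hmi : (m - η) i = x₀ i + (s / t) * (ξ i - x₀ i) - η i := rfl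
    have h1 : (x₀ - η) i = x₀ i - η i := rfl
    have h2 : (η - ξ) i = η i - ξ i := rfl
    have h3 : (x₀ - ξ) i = x₀ i - ξ i := rfl
    rw [hmi, h1, h2, h3]
    field_simp
    ring
  have expid : -‖x₀ - η‖^2 / (2 * s) + (-‖η - ξ‖^2 / (2 * (t - s)))
      - (-‖x₀ - ξ‖^2 / (2 * t))
      = -‖m - η‖^2 / (2 * (s * (t - s) / t)) := by
    have hs' : s ≠ 0 := ne_of_gt hs
    have ht' : t ≠ 0 := ne_of_gt ht
    have hts' : t - s ≠ 0 := ne_of_gt hts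
    set a := ‖x₀ - η‖^2
    set b := ‖η - ξ‖^2
    set c := ‖x₀ - ξ‖^2
    set D := ‖m - η‖^2
    have key' : (t - s) * a + s * b - (s * (t - s) / t) * c = t * D := by linarith [key]
    calc -a / (2 * s) + (-b / (2 * (t - s))) - (-c / (2 * t))
        = -((t - s) * a + s * b - (s * (t - s) / t) * c) / (2 * s * (t - s)) := by
          field_simp
          ring
      _ = -(t * D) / (2 * s * (t - s)) := by rw [key']
      _ = -D / (2 * (s * (t - s) / t)) := by
          field_simp
  have preid : (2 * π * s) ^ (-(d : ℝ) / 2) * (2 * π * (t - s)) ^ (-(d : ℝ) / 2)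
      / (2 * π * t) ^ (-(d : ℝ) / 2)
      = (2 * π * (s * (t - s) / t)) ^ (-(d : ℝ) / 2) := by
    have h1 : (0:ℝ) < 2 * π * s := by positivity
    have h2 : (0:ℝ) < 2 * π * (t - s) := by positivity
    have h3 : (0:ℝ) < 2 * π * t := by positivity
    rw [← Real.mul_rpow h1.le h2.le, ← Real.div_rpow (by positivity) h3.le]
    congr 1
    field_simp
  unfold heatKernel
  rw [show ((2 * π * s) ^ (-(d : ℝ) / 2) * Real.exp (-‖x₀ - η‖ ^ 2 / (2 * s))) *
        ((2 * π * (t - s)) ^ (-(d : ℝ) / 2) * Real.exp (-‖η - ξ‖ ^ 2 / (2 * (t - s)))) /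
        ((2 * π * t) ^ (-(d : ℝ) / 2) * Real.exp (-‖x₀ - ξ‖ ^ 2 / (2 * t)))
      = ((2 * π * s) ^ (-(d : ℝ) / 2) * (2 * π * (t - s)) ^ (-(d : ℝ) / 2)
          / (2 * π * t) ^ (-(d : ℝ) / 2)) *
        (Real.exp (-‖x₀ - η‖ ^ 2 / (2 * s)) * Real.exp (-‖η - ξ‖ ^ 2 / (2 * (t - s)))
          / Real.exp (-‖x₀ - ξ‖ ^ 2 / (2 * t))) from by ring]
  rw [preid, ← Real.exp_add, ← Real.exp_sub, expid]

/-! ### A second-order Taylor inequality -/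

lemma taylor_bound (f : EuclideanSpace ℝ (Fin d) → ℝ) (hf : ContDiff ℝ 2 f)
    {M : ℝ} (hM : 0 ≤ M)
    (hbound : ∀ x, ‖fderiv ℝ (fderiv ℝ f) x‖ ≤ M)
    (ξ η : EuclideanSpace ℝ (Fin d)) :
    f η - f ξ ≤ (fderiv ℝ f ξ) (η - ξ) + M * ‖η - ξ‖^2 := by
  have hdiff : Differentiable ℝ f := hf.differentiable (by norm_num)
  have hf' : ContDiff ℝ 1 (fderiv ℝ f) := hf.fderiv_right (le_refl 2)
  have hdiff' : Differentiable ℝ (fderiv ℝ f) := hf'.differentiable (by norm_num)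
  have lip : ∀ x, ‖fderiv ℝ f x - fderiv ℝ f ξ‖ ≤ M * ‖x - ξ‖ := fun x =>
    (convex_univ :
        Convex ℝ (Set.univ : Set (EuclideanSpace ℝ (Fin d)))).norm_image_sub_le_of_norm_fderiv_le
      (fun y _ => (hdiff' y)) (fun y _ => hbound y) trivial trivial
  have hseg : ∀ x ∈ segment ℝ ξ η, ‖x - ξ‖ ≤ ‖η - ξ‖ := by
    intro x hx
    have h := (convex_closedBall ξ ‖η - ξ‖).segment_subset
      (Metric.mem_closedBall_self (by positivity))
      (by simp [Metric.mem_closedBall, dist_eq_norm]) hx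
    simpa [Metric.mem_closedBall, dist_eq_norm] using h
  have key : ‖f η - f ξ - (fderiv ℝ f ξ) (η - ξ)‖ ≤ (M * ‖η - ξ‖) * ‖η - ξ‖ := by
    refine (convex_segment ξ η).norm_image_sub_le_of_norm_fderiv_le'
      (fun x _ => hdiff x) (fun x hx => ?_) (left_mem_segment ℝ ξ η)
      (right_mem_segment ℝ ξ η)
    exact (lip x).trans (by nlinarith [hseg x hx, norm_nonneg (η - ξ)])
  have h1 : f η - f ξ - (fderiv ℝ f ξ) (η - ξ) ≤ (M * ‖η - ξ‖) * ‖η - ξ‖ :=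
    (le_abs_self _).trans (by rwa [Real.norm_eq_abs] at key)
  nlinarith [sq_nonneg (‖η - ξ‖)]

lemma fderiv2_bdd_aux {E : Type*} [NormedAddCommGroup E] [NormedSpace ℝ E] (f : E → ℝ)
    (hcont2 : Continuous (fderiv ℝ (fderiv ℝ f)))
    (hsupp2 : HasCompactSupport (fderiv ℝ (fderiv ℝ f))) :
    ∃ C, ∀ x, ‖fderiv ℝ (fderiv ℝ f) x‖ ≤ C :=
  Continuous.bounded_above_of_compact_support (E := E →L[ℝ] E →L[ℝ] ℝ)
    (f := fderiv ℝ (fderiv ℝ f)) hcont2 hsupp2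

end Stmt13Aux

open Stmt13Aux

set_option maxHeartbeats 1000000

/-- For `f ∈ C²_c(ℝ^d)` and fixed `x₀, ξ`, there are constants `c₂, c₃ > 0`
so that for all `0 < s < t`, the difference quotient of the time-reversed Brownian transition
operator is bounded: `(t−s)⁻¹ [∫ (g_s(x₀,η) g_{t−s}(η,ξ)/g_t(x₀,ξ)) f(η) dη − f(ξ)]
≤ c₃ (1 + t^{-c₂})`. -/
theorem stmt13 (d : ℕ) (f : EuclideanSpace ℝ (Fin d) → ℝ)
    (hf : ContDiff ℝ 2 f) (hsupp : HasCompactSupport f)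
    (x₀ ξ : EuclideanSpace ℝ (Fin d)) :
    ∃ c₂ : ℝ, 0 < c₂ ∧ ∃ c₃ : ℝ, 0 < c₃ ∧ ∀ s t : ℝ, 0 < s → s < t →
      (t - s)⁻¹ *
        ((∫ η, heatKernel d s x₀ η * heatKernel d (t - s) η ξ / heatKernel d t x₀ ξ * f η)
          - f ξ) ≤ c₃ * (1 + t ^ (-c₂)) := by
  classical
  have hf1 : Differentiable ℝ f := hf.differentiable (by norm_num)
  have hf' : ContDiff ℝ 1 (fderiv ℝ f) := hf.fderiv_right (le_refl 2)
  have hcont2 : Continuous (fderiv ℝ (fderiv ℝ f)) := hf'.continuous_fderiv (by norm_num)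
  have hsupp2 : HasCompactSupport (fderiv ℝ (fderiv ℝ f)) := (hsupp.fderiv (𝕜 := ℝ)).fderiv (𝕜 := ℝ)
  obtain ⟨M₀, hM₀⟩ := fderiv2_bdd_aux f hcont2 hsupp2
  set M := max M₀ 0 with hMdef
  have hMnn : (0:ℝ) ≤ M := le_max_right _ _
  have hMb : ∀ x, ‖fderiv ℝ (fderiv ℝ f) x‖ ≤ M := fun x => (hM₀ x).trans (le_max_left _ _)
  obtain ⟨B, hB⟩ := hf.continuous.bounded_above_of_compact_support hsupp
  set L : EuclideanSpace ℝ (Fin d) →L[ℝ] ℝ := fderiv ℝ f ξ with hLdef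
  set w : EuclideanSpace ℝ (Fin d) := x₀ - ξ with hwdef
  refine ⟨1, one_pos, |L w| + 2*M*‖w‖^2 + 2*M*d + 1, by positivity, ?_⟩
  intro s t hs hst
  have ht : (0:ℝ) < t := hs.trans hst
  have hts : (0:ℝ) < t - s := sub_pos.mpr hst
  set v : ℝ := s * (t - s) / t with hvdef
  have hv : 0 < v := by rw [hvdef]; positivity
  set m : EuclideanSpace ℝ (Fin d) := x₀ + (s / t) • (ξ - x₀) with hmdef
  set K : EuclideanSpace ℝ (Fin d) → ℝ := fun η => heatKernel d v m η with hKdef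
  have hKnn : ∀ η, 0 ≤ K η := fun η => (hk_pos hv m η).le
  have hbridge : ∀ η, heatKernel d s x₀ η * heatKernel d (t - s) η ξ / heatKernel d t x₀ ξ
      = K η := by
    intro η
    simp only [hKdef]
    rw [hvdef, hmdef]
    exact bridge_identity hs hst x₀ ξ η
  have hI : (∫ η, heatKernel d s x₀ η * heatKernel d (t - s) η ξ / heatKernel d t x₀ ξ * f η)
      = ∫ η, K η * f η := by
    congr 1
    funext η
    rw [hbridge η]
  -- integrability facts
  have hKint : Integrable K := hk_integrable hv
  have hKf : Integrable (fun η => K η * f η) := by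
    have h := hKint.bdd_mul hf.continuous.aestronglyMeasurable
      (Filter.Eventually.of_forall hB)
    exact h.congr (Filter.Eventually.of_forall fun η => mul_comm _ _)
  have hKsq : Integrable (fun η => K η * ‖η - m‖^2) := hk_integrable_sq hv
  have hKcont : Continuous K := hk_cont v m
  have hKL : Integrable (fun η => K η * L (η - m)) := by
    refine Integrable.mono' ((hKint.add hKsq).const_mul ‖L‖) ?_ ?_
    · exact (hKcont.mul
        (L.continuous.comp (continuous_id.sub continuous_const))).aestronglyMeasurable
    · refine Filter.Eventually.of_forall fun η => ?_
      have h1 : |L (η - m)| ≤ ‖L‖ * ‖η - m‖ := L.le_opNorm (η - m)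
      have h2 : ‖η - m‖ ≤ 1 + ‖η - m‖^2 := by
        nlinarith [norm_nonneg (η - m), sq_nonneg (‖η - m‖ - 1)]
      have h3 : ‖K η * L (η - m)‖ = K η * |L (η - m)| := by
        rw [Real.norm_eq_abs, abs_mul, abs_of_nonneg (hKnn η)]
      rw [h3]
      calc K η * |L (η - m)| ≤ K η * (‖L‖ * (1 + ‖η - m‖^2)) := by
            refine mul_le_mul_of_nonneg_left (h1.trans ?_) (hKnn η)
            exact mul_le_mul_of_nonneg_left h2 (norm_nonneg _)
        _ = ‖L‖ * (K η + K η * ‖η - m‖^2) := by ring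
  -- pointwise Taylor bound
  set c₄ : ℝ := L (m - ξ) + 2*M*‖m - ξ‖^2 with hc4def
  have hptwise : ∀ η, K η * (f η - f ξ)
      ≤ K η * L (η - m) + K η * c₄ + 2*M*(K η * ‖η - m‖^2) := by
    intro η
    have htay : f η - f ξ ≤ L (η - ξ) + M * ‖η - ξ‖^2 := taylor_bound f hf hMnn hMb ξ η
    have hsplitL : L (η - ξ) = L (η - m) + L (m - ξ) := by
      rw [← map_add]
      congr 1
      abel
    have hsplitN : ‖η - ξ‖^2 ≤ 2*‖η - m‖^2 + 2*‖m - ξ‖^2 := by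
      have h := norm_add_le (η - m) (m - ξ)
      rw [show η - m + (m - ξ) = η - ξ by abel] at h
      nlinarith [mul_self_le_mul_self (norm_nonneg (η - ξ)) h,
        sq_nonneg (‖η - m‖ - ‖m - ξ‖), norm_nonneg (η - m), norm_nonneg (m - ξ)]
    have hmain : f η - f ξ ≤ L (η - m) + c₄ + 2*M*‖η - m‖^2 := by
      rw [hc4def]
      rw [hsplitL] at htay
      nlinarith
    calc K η * (f η - f ξ) ≤ K η * (L (η - m) + c₄ + 2*M*‖η - m‖^2) :=
          mul_le_mul_of_nonneg_left hmain (hKnn η)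
      _ = K η * L (η - m) + K η * c₄ + 2*M*(K η * ‖η - m‖^2) := by ring
  have hKone : ∫ η, K η = 1 := by
    simp only [hKdef]
    exact hk_integral_one hv
  have hKmom1 : ∫ η, K η * L (η - m) = 0 := by
    simp only [hKdef]
    exact hk_linear_moment hv L
  have hKmom2 : ∫ η, K η * ‖η - m‖^2 = (d : ℝ) * v := by
    simp only [hKdef]
    exact hk_sq_moment hv
  have hLHSint : Integrable (fun η => K η * (f η - f ξ)) := by
    have h : (fun η => K η * (f η - f ξ)) = fun η => K η * f η - K η * f ξ := by
      funext η; ring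
    rw [h]
    exact hKf.sub (hKint.mul_const (f ξ))
  have hKsq' : Integrable (fun η => 2*M*(K η * ‖η - m‖^2)) :=
    (hKsq.const_mul (2*M)).congr (Filter.Eventually.of_forall fun η => rfl)
  have hRHSint : Integrable (fun η => K η * L (η - m) + K η * c₄ + 2*M*(K η * ‖η - m‖^2)) :=
    (hKL.add (hKint.mul_const c₄)).add hKsq'
  have hmono := integral_mono hLHSint hRHSint hptwise
  have hIL : ∫ η, K η * (f η - f ξ) = (∫ η, K η * f η) - f ξ := by
    have h : (fun η => K η * (f η - f ξ)) = fun η => K η * f η - K η * f ξ := by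
      funext η; ring
    rw [h, integral_sub hKf (hKint.mul_const (f ξ)), integral_mul_const,
      hKone, one_mul]
  have hKLc : Integrable (fun η => K η * L (η - m) + K η * c₄) :=
    hKL.add (hKint.mul_const c₄)
  have hIR : ∫ η, (K η * L (η - m) + K η * c₄ + 2*M*(K η * ‖η - m‖^2))
      = c₄ + 2*M*((d:ℝ)*v) := by
    rw [integral_add hKLc hKsq', integral_add hKL (hKint.mul_const c₄), hKmom1,
      integral_mul_const, hKone, integral_const_mul]
    have h2 : ∫ η, K η * ‖η - m‖^2 = (d:ℝ) * v := hKmom2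
    rw [h2]
    ring
  rw [hIL, hIR] at hmono
  rw [hI]
  have hstep : (t - s)⁻¹ * ((∫ η, K η * f η) - f ξ) ≤ (t - s)⁻¹ * (c₄ + 2*M*(d*v)) :=
    mul_le_mul_of_nonneg_left hmono (inv_nonneg.mpr hts.le)
  refine hstep.trans ?_
  -- compute everything in terms of `w`
  have hmξ : m - ξ = ((t - s)/t) • w := by
    rw [hmdef, hwdef, show ((t - s)/t : ℝ) = 1 - s/t by field_simp]
    module
  have hLm : L (m - ξ) = ((t - s)/t) * L w := by
    rw [hmξ, ContinuousLinearMap.map_smul, smul_eq_mul]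
  have hNm : ‖m - ξ‖^2 = ((t - s)/t)^2 * ‖w‖^2 := by
    rw [hmξ, norm_smul, mul_pow, Real.norm_eq_abs, sq_abs]
  have hA : (t - s)⁻¹ * (c₄ + 2*M*(d*v))
      = t⁻¹ * L w + 2*M*‖w‖^2 * ((t - s)/t^2) + 2*M*d*(s/t) := by
    rw [hc4def, hLm, hNm, hvdef]
    field_simp
  rw [hA, Real.rpow_neg_one]
  have h1 : t⁻¹ * L w ≤ |L w| * t⁻¹ := by
    rw [mul_comm]
    exact mul_le_mul_of_nonneg_right (le_abs_self _) (inv_nonneg.mpr ht.le)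
  have h2 : (t - s)/t^2 ≤ t⁻¹ := by
    rw [div_le_iff₀ (by positivity)]
    have : t⁻¹ * t^2 = t := by field_simp
    rw [this]
    linarith
  have h2' : 2*M*‖w‖^2 * ((t - s)/t^2) ≤ 2*M*‖w‖^2 * t⁻¹ :=
    mul_le_mul_of_nonneg_left h2 (by positivity)
  have h3 : s/t ≤ 1 := by rw [div_le_one ht]; exact hst.le
  have h3' : 2*M*d*(s/t) ≤ 2*M*d := by
    have := mul_le_mul_of_nonneg_left h3 (by positivity : (0:ℝ) ≤ 2*M*d)
    simpa using this
  have hti : (0:ℝ) ≤ t⁻¹ := inv_nonneg.mpr ht.le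
  have ha : (0:ℝ) ≤ |L w| := abs_nonneg _
  have hb : (0:ℝ) ≤ 2*M*‖w‖^2 := by positivity
  have hc : (0:ℝ) ≤ 2*M*d := by positivity
  nlinarith [mul_nonneg hc hti, mul_nonneg ha hti, mul_nonneg hb hti]


end
end
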